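/- arXiv:1111.2090 — 2 statements merged into one kernel-verified Lean document; each statement's English description precedes it below -/
import Mathlib

section
/- Let R be a ring with no right i-middle class. Then either the socle functor is a radical, i.e., Soc(M/Soc(M)) = 0 for every right R-module M, or the right R-module R/Soc(R_R) is semisimple (so R is right semiartinian of Loewy length at most 2). -/
/-!
Suppose some module has `Soc(M/Soc M) ≠ 0`. Pulling back a simple submodule of `M/Soc M` gives a
module `X` with `X/Soc X` simple; `X` is not semisimple, so by the no-middle-class hypothesis every
`X`-injective module is injective. A module `P` into which every map `Soc X → P` extends over `X`
is `X`-injective, because `Soc X` is semisimple and `X/Soc X` is simple.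

If `Soc N = 0`, every map from `Soc X` into a submodule of `N` vanishes, so every submodule of `N`
is injective, hence a direct summand; thus `N` is semisimple, i.e. `N = 0`. So socles are
essential. For an injective `E`, maps `Soc X → Soc² E` extend over `X` (extend into `E`; the image
of `X/Soc X` in `E/Soc E` is semisimple), so `Soc² E` is an injective summand of `E`; its
complement meets `Soc E` trivially, hence vanishes, and `E/Soc E` is semisimple. Embedding `R` into
an injective module shows that `R/Soc R` is semisimple.
-/

universe u

/-- `M` is `N`-injective. -/
def ModInj (A : Type u) [Ring A] (M : Type u) [AddCommGroup M] [Module A M]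
    (N : Type u) [AddCommGroup N] [Module A N] : Prop :=
  ∀ (K : Submodule A N) (f : K →ₗ[A] M), ∃ g : N →ₗ[A] M, ∀ x : K, g x = f x

/-- `R` has no right i-middle class. -/
def NoRightIMiddleClass (R : Type u) [Ring R] : Prop :=
  ∀ (M : Type u) [AddCommGroup M] [Module Rᵐᵒᵖ M],
    (∀ (N : Type u) [AddCommGroup N] [Module Rᵐᵒᵖ N], ModInj Rᵐᵒᵖ M N) ∨
    (∀ (N : Type u) [AddCommGroup N] [Module Rᵐᵒᵖ N],
      ModInj Rᵐᵒᵖ M N ↔ IsSemisimpleModule Rᵐᵒᵖ N)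

/-- The socle of a module: the sum of all its simple submodules. -/
def socle (A : Type u) [Ring A] (M : Type u) [AddCommGroup M] [Module A M] :
    Submodule A M :=
  sSup {S : Submodule A M | IsSimpleModule A S}

open Submodule LinearMap

section Socle

variable {A : Type u} [Ring A] {M N : Type u} [AddCommGroup M] [Module A M]
  [AddCommGroup N] [Module A N]

instance isSemisimpleModule_socle : IsSemisimpleModule A (socle A M) := by
  rw [socle, sSup_eq_iSup]
  exact isSemisimpleModule_biSup_of_isSemisimpleModule_submodule
    fun p (hp : IsSimpleModule A p) => inferInstance

theorem le_socle_of_isSemisimpleModule (W : Submodule A M) [IsSemisimpleModule A W] :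
    W ≤ socle A M := by
  rw [← W.range_subtype, ← Submodule.map_top, ← IsSemisimpleModule.sSup_simples_eq_top A W,
    (gc_map_comap W.subtype).l_sSup]
  refine iSup₂_le fun p (hp : IsSimpleModule A p) => le_sSup ?_
  exact .congr (p.equivMapOfInjective _ W.injective_subtype).symm

theorem range_le_socle [IsSemisimpleModule A M] (f : M →ₗ[A] N) : range f ≤ socle A N :=
  have := IsSemisimpleModule.range f
  le_socle_of_isSemisimpleModule _

theorem socle_eq_top_iff : socle A M = ⊤ ↔ IsSemisimpleModule A M :=
  sSup_simples_eq_top_iff_isSemisimpleModule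

theorem comap_socle_of_injective {f : M →ₗ[A] N} (hf : Function.Injective f) :
    (socle A N).comap f = socle A M := by
  refine le_antisymm ?_ (map_le_iff_le_comap.mp ?_)
  · let g : (socle A N).comap f →ₗ[A] socle A N := f.restrict fun _ hx => hx
    have : IsSemisimpleModule A ((socle A N).comap f) :=
      .of_injective g fun x y hxy => Subtype.ext (hf (congrArg Subtype.val hxy))
    exact le_socle_of_isSemisimpleModule _
  · simpa [range_comp] using range_le_socle (f ∘ₗ (socle A M).subtype)

theorem isSemisimpleModule_quotient_socle_of_injective {f : M →ₗ[A] N}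
    (hf : Function.Injective f) [IsSemisimpleModule A (N ⧸ socle A N)] :
    IsSemisimpleModule A (M ⧸ socle A M) := by
  have hker : ker ((socle A N).mkQ ∘ₗ f) = socle A M := by
    rw [ker_comp, ker_mkQ, comap_socle_of_injective hf]
  exact .of_injective _ (ker_eq_bot.mp (ker_liftQ_eq_bot _ _ hker.ge hker.le))

theorem not_isSemisimpleModule_of_isSimpleModule_quotient_socle
    (hM : IsSimpleModule A (M ⧸ socle A M)) : ¬ IsSemisimpleModule A M := by
  rw [← socle_eq_top_iff, ← ne_eq, ← Submodule.Quotient.nontrivial_iff]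
  exact hM.nontrivial

theorem exists_isSimpleModule_quotient_socle (h : socle A (M ⧸ socle A M) ≠ ⊥) :
    ∃ X : Submodule A M, IsSimpleModule A (X ⧸ socle A X) := by
  obtain ⟨p, hp⟩ : ∃ p : Submodule A (M ⧸ socle A M), IsSimpleModule A p := by
    by_contra! hp
    exact h (sSup_eq_bot.mpr fun p h' => (hp p h').elim)
  let X := p.comap (socle A M).mkQ
  let g := (socle A M).mkQ ∘ₗ X.subtype
  have hker : ker g = socle A X := by
    rw [ker_comp, ker_mkQ, comap_socle_of_injective X.injective_subtype]
  have hrange : range g = p := by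
    rw [range_comp, range_subtype, map_comap_eq, range_mkQ, top_inf_eq]
  exact ⟨X, .congr ((quotEquivOfEq _ _ hker.symm).trans
    (g.quotKerEquivRange.trans (LinearEquiv.ofEq _ _ hrange)))⟩

end Socle

section Injectivity

variable {A : Type u} [Ring A] {M N P : Type u} [AddCommGroup M] [Module A M]
  [AddCommGroup N] [Module A N] [AddCommGroup P] [Module A P]

theorem ModInj.exists_isCompl {K : Submodule A N} (h : ModInj A K N) : ∃ C, IsCompl K C :=
  have ⟨g, hg⟩ := h K LinearMap.id
  ⟨ker g, isCompl_of_proj hg⟩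

variable (M) in
theorem exists_injective_module_embedding :
    ∃ (E : Type u) (_ : AddCommGroup E) (_ : Module A E) (f : M →ₗ[A] E),
      Module.Injective A E ∧ Function.Injective f := by
  open CategoryTheory in
  let E : ModuleCat.{u} A := Injective.under (ModuleCat.of A M)
  let ι : ModuleCat.of A M ⟶ E := Injective.ι (ModuleCat.of A M)
  exact ⟨E, inferInstance, inferInstance, ι.hom,
    Module.injective_module_of_injective_object (inj := (inferInstance : Injective E)) _ _,
    (ModuleCat.mono_iff_injective ι).mp inferInstance⟩

theorem exists_comp_eq_of_ker_le [IsSimpleModule A N] {g : M →ₗ[A] N} {d : M →ₗ[A] P}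
    (h : ker g ≤ ker d) : ∃ e : N →ₗ[A] P, e ∘ₗ g = d := by
  rcases eq_bot_or_eq_top (range g) with hg | hg
  · refine ⟨0, ext fun x => ?_⟩
    rw [range_eq_bot.mp hg, ker_zero, top_le_iff, ker_eq_top] at h
    simp [h]
  · let e := g.quotKerEquivOfSurjective (range_eq_top.mp hg)
    refine ⟨(ker g).liftQ d h ∘ₗ e.symm.toLinearMap, ext fun x => ?_⟩
    simp [e]

theorem modInj_of_forall_extends {S : Submodule A N} [IsSemisimpleModule A S]
    [IsSimpleModule A (N ⧸ S)] (hext : ∀ φ : S →ₗ[A] P, ∃ ψ : N →ₗ[A] P, ψ ∘ₗ S.subtype = φ) :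
    ModInj A P N := by
  intro K f
  obtain ⟨φ, hφ⟩ := IsSemisimpleModule.extension_property (inclusion inf_le_right)
    (inclusion_injective (inf_le_right : K ⊓ S ≤ S)) (f ∘ₗ inclusion inf_le_left)
  obtain ⟨ψ, rfl⟩ := hext φ
  obtain ⟨e, he⟩ := exists_comp_eq_of_ker_le (g := S.mkQ ∘ₗ K.subtype)
    (d := f - ψ ∘ₗ K.subtype) <| by
      rintro ⟨x, hxK⟩ hxS
      have hx : x ∈ S := by simpa using hxS
      rw [mem_ker, LinearMap.sub_apply, sub_eq_zero]
      exact congr($hφ ⟨x, hxK, hx⟩).symm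
  refine ⟨ψ + e ∘ₗ S.mkQ, fun x => ?_⟩
  simpa [eq_sub_iff_add_eq'] using congr($he x)

end Injectivity

section SecondSocle

variable {A : Type u} [Ring A] {M X E : Type u} [AddCommGroup M] [Module A M]
  [AddCommGroup X] [Module A X] [AddCommGroup E] [Module A E]

def secondSocle (A : Type u) [Ring A] (M : Type u) [AddCommGroup M] [Module A M] :
    Submodule A M :=
  (socle A (M ⧸ socle A M)).comap (socle A M).mkQ

theorem socle_le_secondSocle : socle A M ≤ secondSocle A M := fun x hx => by
  rw [secondSocle, mem_comap, mkQ_apply, (Quotient.mk_eq_zero _).mpr hx]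
  exact zero_mem _

theorem secondSocle_eq_top_iff :
    secondSocle A M = ⊤ ↔ IsSemisimpleModule A (M ⧸ socle A M) := by
  rw [secondSocle, ← comap_top (socle A M).mkQ,
    (comap_injective_of_surjective (socle A M).mkQ_surjective).eq_iff, socle_eq_top_iff]

theorem exists_extension_to_secondSocle [Module.Injective A E]
    [IsSemisimpleModule A (X ⧸ socle A X)] (φ : socle A X →ₗ[A] secondSocle A E) :
    ∃ ψ : X →ₗ[A] secondSocle A E, ψ ∘ₗ (socle A X).subtype = φ := by
  obtain ⟨ψ, hψ⟩ := Module.Injective.extension_property A E _ _ (socle A X).subtype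
    (socle A X).injective_subtype ((secondSocle A E).subtype ∘ₗ φ)
  have hS : socle A X ≤ ker ((socle A E).mkQ ∘ₗ ψ) := fun x hx => by
    rw [mem_ker, comp_apply, mkQ_apply, Quotient.mk_eq_zero]
    change (ψ ∘ₗ (socle A X).subtype) ⟨x, hx⟩ ∈ _
    rw [hψ]
    exact range_le_socle _ (mem_range_self _ _)
  have hψE : ∀ x, ψ x ∈ secondSocle A E := fun x =>
    range_le_socle ((socle A X).liftQ _ hS) (mem_range_self _ ((socle A X).mkQ x))
  exact ⟨ψ.codRestrict _ hψE, ext fun x => Subtype.ext congr($hψ x)⟩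

end SecondSocle

/-- `NoRightIMiddleClass R` is by definition `NoMiddleClass Rᵐᵒᵖ`. -/
def NoMiddleClass (A : Type u) [Ring A] : Prop :=
  ∀ (M : Type u) [AddCommGroup M] [Module A M],
    (∀ (N : Type u) [AddCommGroup N] [Module A N], ModInj A M N) ∨
    (∀ (N : Type u) [AddCommGroup N] [Module A N], ModInj A M N ↔ IsSemisimpleModule A N)

namespace NoMiddleClass

variable {A : Type u} [Ring A] {X N : Type u}
  [AddCommGroup X] [Module A X] [AddCommGroup N] [Module A N]

theorem forall_modInj_of_forall_extends (hA : NoMiddleClass A)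
    (hX : IsSimpleModule A (X ⧸ socle A X)) {P : Type u} [AddCommGroup P] [Module A P]
    (hext : ∀ φ : socle A X →ₗ[A] P, ∃ ψ : X →ₗ[A] P, ψ ∘ₗ (socle A X).subtype = φ) :
    ∀ (N : Type u) [AddCommGroup N] [Module A N], ModInj A P N :=
  (hA P).elim id fun hP => absurd ((hP X).mp (modInj_of_forall_extends hext))
    (not_isSemisimpleModule_of_isSimpleModule_quotient_socle hX)

theorem subsingleton_of_socle_eq_bot (hA : NoMiddleClass A)
    (hX : IsSimpleModule A (X ⧸ socle A X)) (h : socle A N = ⊥) : Subsingleton N := by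
  have hK (K : Submodule A N) : ∃ C, IsCompl K C := by
    refine ModInj.exists_isCompl (hA.forall_modInj_of_forall_extends hX (fun φ => ⟨0, ?_⟩) N)
    have hsoc : socle A K = ⊥ := by
      rw [← comap_socle_of_injective K.injective_subtype, h, comap_bot, ker_subtype]
    have hφ := range_le_socle φ
    rw [hsoc, le_bot_iff, range_eq_bot] at hφ
    rw [hφ, zero_comp]
  have : IsSemisimpleModule A N := (isSemisimpleModule_iff A N).mpr ⟨hK⟩
  rw [← socle_eq_top_iff, h] at this
  exact (Submodule.subsingleton_iff A).mp (subsingleton_of_bot_eq_top this)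

theorem eq_bot_of_disjoint_socle (hA : NoMiddleClass A)
    (hX : IsSimpleModule A (X ⧸ socle A X)) {U : Submodule A N} (h : Disjoint U (socle A N)) :
    U = ⊥ := by
  rw [disjoint_iff_comap_eq_bot, comap_socle_of_injective U.injective_subtype] at h
  exact subsingleton_iff_eq_bot.mp (hA.subsingleton_of_socle_eq_bot hX h)

theorem isSemisimpleModule_quotient_socle_of_injective (hA : NoMiddleClass A)
    (hX : IsSimpleModule A (X ⧸ socle A X))
    (E : Type u) [AddCommGroup E] [Module A E] [Module.Injective A E] :
    IsSemisimpleModule A (E ⧸ socle A E) := by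
  obtain ⟨C, hC⟩ := ModInj.exists_isCompl
    (hA.forall_modInj_of_forall_extends hX exists_extension_to_secondSocle E)
  have hC_bot : C = ⊥ :=
    hA.eq_bot_of_disjoint_socle hX (hC.disjoint.symm.mono_right socle_le_secondSocle)
  rw [← secondSocle_eq_top_iff]
  exact eq_top_of_isCompl_bot (hC_bot ▸ hC)

theorem isSemisimpleModule_quotient_socle (hA : NoMiddleClass A)
    (hX : IsSimpleModule A (X ⧸ socle A X)) (M : Type u) [AddCommGroup M] [Module A M] :
    IsSemisimpleModule A (M ⧸ socle A M) := by
  obtain ⟨E, _, _, f, _, hf⟩ := exists_injective_module_embedding (A := A) M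
  have := hA.isSemisimpleModule_quotient_socle_of_injective hX E
  exact _root_.isSemisimpleModule_quotient_socle_of_injective hf

end NoMiddleClass

/-- if `R` has no right i-middle class, then either the socle is a radical
(`Soc(M/Soc M) = 0` for every right module `M`), or `R/Soc(R_R)` is a semisimple right
module. -/
theorem stmt_10 (R : Type u) [Ring R] (h : NoRightIMiddleClass R) :
    (∀ (M : Type u) [AddCommGroup M] [Module Rᵐᵒᵖ M],
      socle Rᵐᵒᵖ (M ⧸ socle Rᵐᵒᵖ M) = ⊥) ∨
    IsSemisimpleModule Rᵐᵒᵖ (Rᵐᵒᵖ ⧸ socle Rᵐᵒᵖ Rᵐᵒᵖ) := by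
  refine or_iff_not_imp_left.mpr fun hrad => ?_
  simp only [not_forall] at hrad
  obtain ⟨M, _, _, hM⟩ := hrad
  obtain ⟨X, hX⟩ := exists_isSimpleModule_quotient_socle hM
  exact NoMiddleClass.isSemisimpleModule_quotient_socle h hX Rᵐᵒᵖ
end

section
/- Let R be a right perfect ring. If R has no right i-middle class, then R has no right p-middle class. -/
universe u

/-- `M` is `N`-projective. -/
def ModProj (A : Type u) [Ring A] (M : Type u) [AddCommGroup M] [Module A M]
    (N : Type u) [AddCommGroup N] [Module A N] : Prop :=
  ∀ (K : Type u) [AddCommGroup K] [Module A K] (g : N →ₗ[A] K),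
    Function.Surjective g → ∀ f : M →ₗ[A] K, ∃ h : M →ₗ[A] N, ∀ x : M, g (h x) = f x

/-- A submodule `K ≤ P` is superfluous. -/
def Superfluous (A : Type u) [Ring A] {P : Type u} [AddCommGroup P] [Module A P]
    (K : Submodule A P) : Prop :=
  ∀ L : Submodule A P, K ⊔ L = ⊤ → L = ⊤

/-- `R` is right perfect: every right `R`-module has a projective cover. -/
def RightPerfect (R : Type u) [Ring R] : Prop :=
  ∀ (M : Type u) [AddCommGroup M] [Module Rᵐᵒᵖ M],
    ∃ (P : ModuleCat.{u} Rᵐᵒᵖ) (p : P →ₗ[Rᵐᵒᵖ] M),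
      (∀ (N : Type u) [AddCommGroup N] [Module Rᵐᵒᵖ N], ModProj Rᵐᵒᵖ P N) ∧
      Function.Surjective p ∧ Superfluous Rᵐᵒᵖ (LinearMap.ker p)

/-- `R` has no right p-middle class. -/
def NoRightPMiddleClass (R : Type u) [Ring R] : Prop :=
  ∀ (M : Type u) [AddCommGroup M] [Module Rᵐᵒᵖ M],
    (∀ (N : Type u) [AddCommGroup N] [Module Rᵐᵒᵖ N], ModProj Rᵐᵒᵖ M N) ∨
    (∀ (N : Type u) [AddCommGroup N] [Module Rᵐᵒᵖ N],
      ModProj Rᵐᵒᵖ M N ↔ IsSemisimpleModule Rᵐᵒᵖ N)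

/-!
Let `M` be non-projective with projective cover `p : P → M`, so `K = ker p` is a nonzero
superfluous submodule. If `M` is `N`-projective, every map `P → N` vanishes on `K`, and hence so
does every map `P → T` that lifts through a direct sum of copies of `N`. Embed `K` into an
injective `E` and let `T ⊆ E` be generated by `K` and the images of all maps `N → E`. Then `T` is
`N`-injective, since extensions into `E` land in `T`. It is not `P`-injective: an extension
`u : P → T` of `K ↪ T` would make `u K` superfluous in `T`, so `T` would be covered by copies of
`N` and `u` would vanish on `K ≠ 0`. So `T` is not injective, and having no i-middle class
forces `N` to be semisimple.
-/

open LinearMap Submodule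

section

variable {A : Type u} [Ring A] {M N P T : Type u} [AddCommGroup M] [Module A M]
  [AddCommGroup N] [Module A N] [AddCommGroup P] [Module A P] [AddCommGroup T] [Module A T]

theorem modProj_of_isSemisimpleModule [IsSemisimpleModule A N] : ModProj A M N :=
  fun _ _ _ g hg f ↦
    have ⟨h, hh⟩ := IsSemisimpleModule.lifting_property g hg f
    ⟨h, LinearMap.congr_fun hh⟩

theorem modProj_of_linearEquiv (hP : ModProj A P N) (e : P ≃ₗ[A] M) : ModProj A M N := by
  intro K _ _ g hg f
  obtain ⟨h, hh⟩ := hP K g hg (f ∘ₗ e)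
  exact ⟨h ∘ₗ e.symm, fun x ↦ by simpa using hh (e.symm x)⟩

theorem superfluous_map {K : Submodule A P} (hK : Superfluous A K) (u : P →ₗ[A] T) :
    Superfluous A (K.map u) := by
  intro L hL
  have hcomap : K ⊔ L.comap u = ⊤ := by
    refine eq_top_iff'.mpr fun x ↦ ?_
    obtain ⟨_, ⟨k, hk, rfl⟩, l, hl, hkl⟩ := mem_sup.mp (hL ▸ mem_top : u x ∈ K.map u ⊔ L)
    refine mem_sup.mpr ⟨k, hk, x - k, ?_, by abel⟩
    rwa [mem_comap, map_sub, ← hkl, add_sub_cancel_left]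
  have hrange : range u ≤ L := range_le_iff_comap.mpr (hK _ hcomap)
  rw [← hL, sup_eq_right.mpr ((map_le_range).trans hrange)]

theorem ker_le_ker_of_modProj {p : P →ₗ[A] M} (hp : Function.Surjective p)
    (hK : Superfluous A (ker p)) (hMN : ModProj A M N) (t : P →ₗ[A] N) : ker p ≤ ker t := by
  set W := (ker p).map t
  have hle : ker p ≤ ker (W.mkQ ∘ₗ t) := fun k hk ↦
    mem_ker.mpr <| (Quotient.mk_eq_zero W).mpr (mem_map_of_mem hk)
  obtain ⟨h, hh⟩ := hMN (N ⧸ W) W.mkQ W.mkQ_surjective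
    ((ker p).liftQ _ hle ∘ₗ (p.quotKerEquivOfSurjective hp).symm)
  set ψ := t - h ∘ₗ p
  have hψ_ker : ∀ k ∈ ker p, ψ k = t k := fun k hk ↦ by
    simp [ψ, mem_ker.mp hk]
  -- `ψ ≡ t` modulo `W`, so `ψ` takes values in `W = t (ker p) = ψ (ker p)`.
  have hψ_range : range ψ ≤ (ker p).map ψ := by
    rintro _ ⟨x, rfl⟩
    have hx : ψ x ∈ W := by
      have : W.mkQ (h (p x)) = W.mkQ (t x) := by simpa using hh (p x)
      simpa [ψ] using (Submodule.Quotient.eq W).mp this.symm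
    obtain ⟨k, hk, hkx⟩ := mem_map.mp hx
    exact ⟨k, hk, (hψ_ker k hk).trans hkx⟩
  have hψ_zero : ker ψ = ⊤ :=
    hK _ (by rw [← comap_map_eq, ← range_le_iff_comap]; exact hψ_range)
  intro k hk
  rw [mem_ker, ← hψ_ker k hk, ← mem_ker, hψ_zero]
  exact mem_top

theorem ker_le_ker_finsupp_of_modProj {ι : Type*} {p : P →ₗ[A] M} (hp : Function.Surjective p)
    (hK : Superfluous A (ker p)) (hMN : ModProj A M N) (t : P →ₗ[A] ι →₀ N) :
    ker p ≤ ker t := fun k hk ↦ by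
  ext i
  exact ker_le_ker_of_modProj hp hK hMN (Finsupp.lapply i ∘ₗ t) hk

theorem ker_le_ker_of_map_ker_sup_range_eq_top {ι : Type u} {p : P →ₗ[A] M}
    (hp : Function.Surjective p) (hK : Superfluous A (ker p)) (hMN : ModProj A M N)
    (hP : ModProj A P (ι →₀ N)) (u : P →ₗ[A] T) (Φ : (ι →₀ N) →ₗ[A] T)
    (hT : (ker p).map u ⊔ range Φ = ⊤) : ker p ≤ ker u := by
  obtain ⟨t, ht⟩ := hP T Φ (range_eq_top.mp (superfluous_map hK u _ hT)) u
  intro k hk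
  rw [mem_ker, ← ht, mem_ker.mp (ker_le_ker_finsupp_of_modProj hp hK hMN t hk), map_zero]

theorem modInj_of_forall_range_le {E : Type u} [AddCommGroup E] [Module A E]
    [Module.Injective A E] (T : Submodule A E) (hT : ∀ v : N →ₗ[A] E, range v ≤ T) :
    ModInj A T N := by
  intro K f
  obtain ⟨g, hg⟩ := Module.Injective.extension_property A E K N K.subtype K.injective_subtype
    (T.subtype ∘ₗ f)
  exact ⟨g.codRestrict T fun n ↦ hT g ⟨n, rfl⟩, fun x ↦ Subtype.ext (LinearMap.congr_fun hg x)⟩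

theorem not_modInj_sup_range {ι E : Type u} [AddCommGroup E] [Module A E] {p : P →ₗ[A] M}
    (hp : Function.Surjective p) (hK : Superfluous A (ker p)) (hK₀ : ker p ≠ ⊥)
    (hMN : ModProj A M N) (hP : ModProj A P (ι →₀ N)) {j : ker p →ₗ[A] E}
    (hj : Function.Injective j) (Ψ : (ι →₀ N) →ₗ[A] E) :
    ¬ ModInj A ↥(range j ⊔ range Ψ) P := by
  set T := range j ⊔ range Ψ
  intro hTP
  obtain ⟨u, hu⟩ := hTP (ker p) (j.codRestrict T fun k ↦ mem_sup_left ⟨k, rfl⟩)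
  let Φ := Ψ.codRestrict T fun y ↦ mem_sup_right ⟨y, rfl⟩
  have hT : (ker p).map u ⊔ range Φ = ⊤ := by
    refine eq_top_iff'.mpr fun ⟨x, hx⟩ ↦ ?_
    obtain ⟨_, ⟨k, rfl⟩, _, ⟨y, rfl⟩, rfl⟩ := mem_sup.mp hx
    have : (⟨j k + Ψ y, hx⟩ : T) = u k + Φ y := Subtype.ext (by simp [hu k, Φ])
    exact this ▸ add_mem (mem_sup_left (mem_map_of_mem k.2)) (mem_sup_right ⟨y, rfl⟩)
  have hu₀ := ker_le_ker_of_map_ker_sup_range_eq_top hp hK hMN hP u Φ hT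
  refine hK₀ (eq_bot_iff.mpr fun k hk ↦ ?_)
  have : j ⟨k, hk⟩ = 0 := congr_arg Subtype.val ((hu ⟨k, hk⟩).symm.trans (hu₀ hk))
  simpa using hj (this.trans (map_zero j).symm)

variable (A) in
theorem exists_injective_linearMap_to_injective (K : Type u) [AddCommGroup K] [Module A K] :
    ∃ (E : Type u) (_ : AddCommGroup E) (_ : Module A E) (j : K →ₗ[A] E),
      Module.Injective A E ∧ Function.Injective j := by
  open CategoryTheory in
  let I : ModuleCat A := Injective.under (ModuleCat.of A K)
  have : Injective (ModuleCat.of A I) := (inferInstance : Injective I)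
  exact ⟨I, _, _, (Injective.ι (ModuleCat.of A K)).hom,
    Module.injective_module_of_injective_object A I,
    (ModuleCat.mono_iff_injective _).mp inferInstance⟩

end

theorem isSemisimpleModule_of_modProj_of_noRightIMiddleClass {R : Type u} [Ring R]
    (h : NoRightIMiddleClass R) {M N P : Type u} [AddCommGroup M] [Module Rᵐᵒᵖ M]
    [AddCommGroup N] [Module Rᵐᵒᵖ N] [AddCommGroup P] [Module Rᵐᵒᵖ P] {p : P →ₗ[Rᵐᵒᵖ] M}
    (hp : Function.Surjective p) (hK : Superfluous Rᵐᵒᵖ (ker p)) (hK₀ : ker p ≠ ⊥)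
    (hP : ∀ (V : Type u) [AddCommGroup V] [Module Rᵐᵒᵖ V], ModProj Rᵐᵒᵖ P V)
    (hMN : ModProj Rᵐᵒᵖ M N) : IsSemisimpleModule Rᵐᵒᵖ N := by
  obtain ⟨E, _, _, j, hE, hj⟩ := exists_injective_linearMap_to_injective Rᵐᵒᵖ (ker p)
  let Ψ : ((N →ₗ[Rᵐᵒᵖ] E) →₀ N) →ₗ[Rᵐᵒᵖ] E := Finsupp.lsum ℕ fun v ↦ v
  have hΨ : ∀ v : N →ₗ[Rᵐᵒᵖ] E, range v ≤ range Ψ := by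
    rintro v _ ⟨n, rfl⟩
    exact ⟨Finsupp.single v n, by simp [Ψ]⟩
  let T := range j ⊔ range Ψ
  have hTN : ModInj Rᵐᵒᵖ T N := modInj_of_forall_range_le T fun v ↦ (hΨ v).trans le_sup_right
  have hTP : ¬ ModInj Rᵐᵒᵖ T P := not_modInj_sup_range hp hK hK₀ hMN (hP _) hj Ψ
  exact (((h T).resolve_left fun hT ↦ hTP (hT P)) N).mp hTN

/-- a right perfect ring with no right i-middle class has no right
p-middle class. -/
theorem stmt_13 (R : Type u) [Ring R] (hperf : RightPerfect R)
    (h : NoRightIMiddleClass R) : NoRightPMiddleClass R := by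
  intro M _ _
  by_cases hM : ∀ (N : Type u) [AddCommGroup N] [Module Rᵐᵒᵖ N], ModProj Rᵐᵒᵖ M N
  · exact Or.inl hM
  obtain ⟨P, p, hP, hp, hK⟩ := hperf M
  have hK₀ : ker p ≠ ⊥ := fun hbot ↦ hM fun N _ _ ↦
    modProj_of_linearEquiv (hP N) (.ofBijective p ⟨ker_eq_bot.mp hbot, hp⟩)
  exact Or.inr fun N _ _ ↦
    ⟨isSemisimpleModule_of_modProj_of_noRightIMiddleClass h hp hK hK₀ hP,
      fun _ ↦ modProj_of_isSemisimpleModule⟩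
end
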